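/- A binary-conflict-free net has exactly one maximal FS-run, namely the set of all partial FS-runs (↔*-classes of all firing sequences); this set is non-empty, prefix-closed and directed, and contains every FS-run. -/

import Mathlib

structure Net (S T : Type) where
  pre : T → S → ℕ
  post : T → S → ℕ
  M0 : S → ℕ

namespace Net

variable {S T : Type}

/-- `t` is enabled in marking `M`: all tokens in its preplaces are available. -/
def enabled (N : Net S T) (t : T) (M : S → ℕ) : Prop := ∀ s, N.pre t s ≤ M s

/-- The marking obtained by firing `t` from `M`. -/
def fire (N : Net S T) (M : S → ℕ) (t : T) : S → ℕ :=
  fun s => M s - N.pre t s + N.post t s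

/-- `Fires N M σ M'` : the word `σ` of transitions can fire from `M`, leading to `M'`. -/
inductive Fires (N : Net S T) : (S → ℕ) → List T → (S → ℕ) → Prop
  | nil (M : S → ℕ) : Fires N M [] M
  | cons {M M' : S → ℕ} {t : T} {σ : List T} (h : N.enabled t M)
      (h' : Fires N (N.fire M t) σ M') : Fires N M (t :: σ) M'

/-- `σ` is a firing sequence of `N`. -/
def FS (N : Net S T) (σ : List T) : Prop := ∃ M, N.Fires N.M0 σ M

/-- `M` is reachable from the initial marking. -/
def Reachable (N : Net S T) (M : S → ℕ) : Prop := ∃ σ, N.Fires N.M0 σ M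

/-- The step (multiset) `{t,u}` is enabled in `M`. -/
def enabledPair (N : Net S T) (t u : T) (M : S → ℕ) : Prop :=
  ∀ s, N.pre t s + N.pre u s ≤ M s

/-- Binary-conflict-freeness. -/
def bcf (N : Net S T) : Prop :=
  ∀ M, N.Reachable M → ∀ t u, t ≠ u → N.enabled t M → N.enabled u M → N.enabledPair t u M

/-- Adjacency of firing sequences: exchange of two consecutive transitions forming an enabled step. -/
def Adjacent (N : Net S T) (σ ρ : List T) : Prop :=
  N.FS σ ∧ N.FS ρ ∧ ∃ σ₁ t u σ₂ M, σ = σ₁ ++ t :: u :: σ₂ ∧ ρ = σ₁ ++ u :: t :: σ₂ ∧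
    N.Fires N.M0 σ₁ M ∧ N.enabledPair t u M

/-- Reflexive-transitive closure of adjacency. -/
def AdjStar (N : Net S T) : List T → List T → Prop := Relation.ReflTransGen N.Adjacent

/-- Prefix relation on partial FS-runs, on representatives: `[σ] ≤ [ρ]`. -/
def runLe (N : Net S T) (σ ρ : List T) : Prop := ∃ μ, σ <+: μ ∧ N.AdjStar μ ρ

end Net

namespace Net
variable {S T : Type}

/-- An FS-run, represented as a set of firing sequences closed under `↔*`
(i.e. a union of partial FS-runs, the `↔*`-classes): non-empty, prefix-closed
and directed w.r.t. the prefix order on partial FS-runs. -/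
def IsFSRun (N : Net S T) (R : Set (List T)) : Prop :=
  R.Nonempty ∧ (∀ σ ∈ R, N.FS σ) ∧
  (∀ σ ∈ R, ∀ ρ, N.AdjStar σ ρ → ρ ∈ R) ∧
  (∀ ρ ∈ R, ∀ σ, N.FS σ → N.runLe σ ρ → σ ∈ R) ∧
  (∀ σ ∈ R, ∀ ρ ∈ R, ∃ ν ∈ R, N.runLe σ ν ∧ N.runLe ρ ν)

end Net

namespace Net
variable {S T : Type}

lemma fires_det {N : Net S T} {M M₁ M₂ : S → ℕ} {σ : List T}
    (h1 : N.Fires M σ M₁) (h2 : N.Fires M σ M₂) : M₁ = M₂ := by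
  induction h1 with
  | nil => cases h2; rfl
  | cons h h' ih => cases h2 with | cons _ h2' => exact ih h2'

lemma pair_symm {N : Net S T} {t u : T} {M : S → ℕ} (h : N.enabledPair t u M) :
    N.enabledPair u t M := fun s => by have := h s; omega

lemma pair_left {N : Net S T} {t u : T} {M : S → ℕ} (h : N.enabledPair t u M) :
    N.enabled t M := fun s => le_trans (Nat.le_add_right _ _) (h s)

lemma enabled_after {N : Net S T} {t u : T} {M : S → ℕ} (h : N.enabledPair t u M) :
    N.enabled u (N.fire M t) := fun s => by
  have := h s; simp only [fire]; omega

lemma fire_comm {N : Net S T} {t u : T} {M : S → ℕ} (h : N.enabledPair t u M) :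
    N.fire (N.fire M t) u = N.fire (N.fire M u) t := by
  funext s; have := h s; simp only [fire]; omega

lemma fires_append {N : Net S T} {M M₂ : S → ℕ} {σ ρ : List T} :
    N.Fires M (σ ++ ρ) M₂ ↔ ∃ M₁, N.Fires M σ M₁ ∧ N.Fires M₁ ρ M₂ := by
  constructor
  · intro h
    induction σ generalizing M with
    | nil => exact ⟨M, .nil M, h⟩
    | cons t σ ih =>
        cases h with
        | cons he h' =>
            obtain ⟨M₁, h1, h2⟩ := ih h'
            exact ⟨M₁, .cons he h1, h2⟩
  · rintro ⟨M₁, h1, h2⟩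
    induction h1 with
    | nil => exact h2
    | cons he _ ih => exact .cons he (ih h2)

lemma adjacent_fires {N : Net S T} {σ ρ : List T} {M : S → ℕ}
    (h : N.Adjacent σ ρ) (hf : N.Fires N.M0 σ M) : N.Fires N.M0 ρ M := by
  obtain ⟨_, _, σ₁, t, u, σ₂, M₁, rfl, rfl, h1, hp⟩ := h
  rw [fires_append] at hf ⊢
  obtain ⟨M₁', hσ₁, hrest⟩ := hf
  obtain rfl : M₁ = M₁' := fires_det h1 hσ₁
  refine ⟨M₁, h1, ?_⟩
  cases hrest with
  | cons ht hr =>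
    cases hr with
    | cons hu hrr =>
      refine .cons (pair_left (pair_symm hp)) (.cons (enabled_after (pair_symm hp)) ?_)
      rwa [← fire_comm hp]

lemma adjacent_symm {N : Net S T} {σ ρ : List T} (h : N.Adjacent σ ρ) : N.Adjacent ρ σ := by
  obtain ⟨h1, h2, σ₁, t, u, σ₂, M, e1, e2, hf, hp⟩ := h
  exact ⟨h2, h1, σ₁, u, t, σ₂, M, e2, e1, hf, pair_symm hp⟩

lemma adjStar_symm {N : Net S T} {σ ρ : List T} (h : N.AdjStar σ ρ) : N.AdjStar ρ σ := by
  induction h with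
  | refl => exact .refl
  | tail _ hadj ih => exact Relation.ReflTransGen.trans (.single (adjacent_symm hadj)) ih

lemma adjStar_fires {N : Net S T} {σ ρ : List T} {M : S → ℕ}
    (h : N.AdjStar σ ρ) (hf : N.Fires N.M0 σ M) : N.Fires N.M0 ρ M := by
  induction h with
  | refl => exact hf
  | tail _ hadj ih => exact adjacent_fires hadj ih

lemma adjacent_append {N : Net S T} {σ ρ γ : List T} {M M' : S → ℕ} (h : N.Adjacent σ ρ)
    (hσ : N.Fires N.M0 σ M) (hγ : N.Fires M γ M') :
    N.Adjacent (σ ++ γ) (ρ ++ γ) := by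
  have hρ : N.Fires N.M0 ρ M := adjacent_fires h hσ
  obtain ⟨h1, h2, σ₁, t, u, σ₂, M₁, rfl, rfl, hf, hp⟩ := h
  refine ⟨⟨M', fires_append.mpr ⟨M, hσ, hγ⟩⟩, ⟨M', fires_append.mpr ⟨M, hρ, hγ⟩⟩,
    σ₁, t, u, σ₂ ++ γ, M₁, by simp, by simp, hf, hp⟩

lemma adjStar_append {N : Net S T} {σ ρ γ : List T} {M M' : S → ℕ} (h : N.AdjStar σ ρ)
    (hσ : N.Fires N.M0 σ M) (hγ : N.Fires M γ M') :
    N.AdjStar (σ ++ γ) (ρ ++ γ) := by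
  induction h with
  | refl => exact .refl
  | tail hab hbc ih => exact ih.tail (adjacent_append hbc (adjStar_fires hab hσ) hγ)

lemma first_split {t : T} {ρ : List T} (h : t ∈ ρ) :
    ∃ α β, ρ = α ++ t :: β ∧ t ∉ α := by
  induction ρ with
  | nil => simp at h
  | cons u ρ' ih =>
      by_cases hu : u = t
      · exact ⟨[], ρ', by simp [hu], by simp⟩
      · have ht' : t ∈ ρ' := by
          rcases List.mem_cons.mp h with h | h
          · exact absurd h (fun e => hu e.symm)
          · exact h
        obtain ⟨α, β, rfl, hα⟩ := ih ht'
        refine ⟨u :: α, β, rfl, ?_⟩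
        simp only [List.mem_cons, not_or]
        exact ⟨fun e => hu e.symm, hα⟩

end Net

namespace Net
variable {S T : Type}

lemma perm_front {N : Net S T} (hbcf : N.bcf) :
    ∀ (α : List T) {β : List T} {t : T} {M Mρ : S → ℕ} (π : List T),
      N.Fires N.M0 π M → t ∉ α → N.enabled t M → N.Fires M (α ++ t :: β) Mρ →
      N.Fires M (t :: (α ++ β)) Mρ ∧ N.AdjStar (π ++ (α ++ t :: β)) (π ++ t :: (α ++ β)) := by
  intro α
  induction α with
  | nil => intro β t M Mρ π hπ _ ht hF; exact ⟨hF, .refl⟩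
  | cons u α' ih =>
      intro β t M Mρ π hπ htα ht hF
      cases hF with
      | cons hu hF' =>
        have hut : u ≠ t := fun e => htα (e ▸ List.mem_cons_self (a := u) (l := α'))
        have hp : N.enabledPair u t M := hbcf M ⟨π, hπ⟩ u t hut hu ht
        have hπu : N.Fires N.M0 (π ++ [u]) (N.fire M u) :=
          fires_append.mpr ⟨M, hπ, .cons hu (.nil _)⟩
        have htα' : t ∉ α' := fun h => htα (List.mem_cons_of_mem _ h)
        obtain ⟨hF'', hAdj⟩ := ih (π ++ [u]) hπu htα' (enabled_after hp) hF'
        -- hF'' : Fires (fire M u) (t :: (α' ++ β)) Mρ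
        have hFtu : N.Fires M (t :: u :: (α' ++ β)) Mρ := by
          cases hF'' with
          | cons ht' hF3 =>
            refine .cons ht (.cons (enabled_after (pair_symm hp)) ?_)
            rwa [← fire_comm hp]
        have hFut : N.Fires M (u :: t :: (α' ++ β)) Mρ := by
          cases hF'' with
          | cons ht' hF3 => exact .cons hu (.cons ht' hF3)
        have hstep : N.Adjacent (π ++ u :: t :: (α' ++ β)) (π ++ t :: u :: (α' ++ β)) :=
          ⟨⟨Mρ, fires_append.mpr ⟨M, hπ, hFut⟩⟩, ⟨Mρ, fires_append.mpr ⟨M, hπ, hFtu⟩⟩,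
            π, u, t, α' ++ β, M, rfl, rfl, hπ, hp⟩
        constructor
        · exact hFtu
        · have h1 : N.AdjStar (π ++ (u :: α' ++ t :: β)) (π ++ u :: t :: (α' ++ β)) := by
            have := hAdj
            simpa using this
          exact h1.tail hstep

lemma push_back {N : Net S T} (hbcf : N.bcf) :
    ∀ (ρ : List T) {t : T} {M M₁ : S → ℕ} (π : List T),
      N.Fires N.M0 π M → t ∉ ρ → N.enabled t M → N.Fires M ρ M₁ →
      N.Fires (N.fire M t) ρ (N.fire M₁ t) ∧ N.AdjStar (π ++ ρ ++ [t]) (π ++ t :: ρ) := by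
  intro ρ
  induction ρ with
  | nil =>
      intro t M M₁ π hπ _ ht hF
      cases hF
      exact ⟨.nil _, by simp; exact .refl⟩
  | cons u ρ' ih =>
      intro t M M₁ π hπ htρ ht hF
      cases hF with
      | cons hu hF' =>
        have hut : u ≠ t := fun e => htρ (e ▸ List.mem_cons_self (a := u) (l := ρ'))
        have hp : N.enabledPair u t M := hbcf M ⟨π, hπ⟩ u t hut hu ht
        have hπu : N.Fires N.M0 (π ++ [u]) (N.fire M u) :=
          fires_append.mpr ⟨M, hπ, .cons hu (.nil _)⟩
        have htρ' : t ∉ ρ' := fun h => htρ (List.mem_cons_of_mem _ h)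
        obtain ⟨hF'', hAdj⟩ := ih (π ++ [u]) hπu htρ' (enabled_after hp) hF'
        -- hF'' : Fires (fire (fire M u) t) ρ' (fire M₁ t)
        have hFtu : N.Fires M (t :: u :: ρ') (N.fire M₁ t) := by
          refine .cons ht (.cons (enabled_after (pair_symm hp)) ?_)
          rwa [← fire_comm hp]
        have hFut : N.Fires M (u :: t :: ρ') (N.fire M₁ t) :=
          .cons hu (.cons (enabled_after hp) hF'')
        have hstep : N.Adjacent (π ++ u :: t :: ρ') (π ++ t :: u :: ρ') :=
          ⟨⟨_, fires_append.mpr ⟨M, hπ, hFut⟩⟩, ⟨_, fires_append.mpr ⟨M, hπ, hFtu⟩⟩,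
            π, u, t, ρ', M, rfl, rfl, hπ, hp⟩
        constructor
        · cases hFtu with
          | cons _ h => exact h
        · have h1 : N.AdjStar (π ++ (u :: ρ') ++ [t]) (π ++ u :: t :: ρ') := by
            have := hAdj
            simpa using this
          exact h1.tail hstep

lemma main_confluence {N : Net S T} (hbcf : N.bcf) :
    ∀ (σ : List T) {M Mσ Mρ : S → ℕ} (π ρ : List T), N.Fires N.M0 π M →
      N.Fires M σ Mσ → N.Fires M ρ Mρ →
      ∃ τ μ, ρ <+: μ ∧ N.FS (π ++ σ ++ τ) ∧ N.AdjStar (π ++ μ) (π ++ σ ++ τ) := by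
  intro σ
  induction σ with
  | nil =>
      intro M Mσ Mρ π ρ hπ _ hρ
      exact ⟨ρ, ρ, List.prefix_refl ρ, ⟨Mρ, by simpa using fires_append.mpr ⟨M, hπ, hρ⟩⟩,
        by simpa [AdjStar] using (Relation.ReflTransGen.refl : N.AdjStar (π ++ ρ) (π ++ ρ))⟩
  | cons t σ' ih =>
      intro M Mσ Mρ π ρ hπ hσ hρ
      cases hσ with
      | cons ht hσ' =>
        have hπt : N.Fires N.M0 (π ++ [t]) (N.fire M t) :=
          fires_append.mpr ⟨M, hπ, .cons ht (.nil _)⟩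
        by_cases htρ : t ∈ ρ
        · obtain ⟨α, β, rfl, hα⟩ := first_split htρ
          obtain ⟨hFt, hAdj1⟩ := perm_front hbcf α π hπ hα ht hρ
          have hFt' : N.Fires (N.fire M t) (α ++ β) Mρ := by
            cases hFt with | cons _ h => exact h
          obtain ⟨τ, μ', hpre, hFS, hAdj2⟩ := ih (π ++ [t]) (α ++ β) hπt hσ' hFt'
          obtain ⟨γ, rfl⟩ := hpre
          -- γ fires from Mρ
          have hFS2 := hFS
          obtain ⟨Mf, hMf⟩ := hFS2
          have hMf' : N.Fires N.M0 ((π ++ [t]) ++ ((α ++ β) ++ γ)) Mf :=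
            adjStar_fires (adjStar_symm hAdj2) hMf
          obtain ⟨Mx, hx1, hx2⟩ := fires_append.mp hMf'
          obtain rfl : N.fire M t = Mx := by
            obtain ⟨My, hy1, hy2⟩ := fires_append.mp hx1
            obtain rfl : M = My := fires_det hπ hy1
            cases hy2 with | cons _ h => cases h; rfl
          obtain ⟨Mz, hz1, hz2⟩ := fires_append.mp hx2
          obtain rfl : Mρ = Mz := fires_det hFt' hz1
          -- now build
          have hρfull : N.Fires N.M0 (π ++ (α ++ t :: β)) Mρ := fires_append.mpr ⟨M, hπ, hρ⟩
          have hA : N.AdjStar ((π ++ (α ++ t :: β)) ++ γ) ((π ++ t :: (α ++ β)) ++ γ) :=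
            adjStar_append hAdj1 hρfull hz2
          refine ⟨τ, (α ++ t :: β) ++ γ, ⟨γ, rfl⟩, by simpa using hFS, ?_⟩
          have hA2 : N.AdjStar ((π ++ [t]) ++ ((α ++ β) ++ γ)) ((π ++ [t]) ++ σ' ++ τ) := hAdj2
          have := Relation.ReflTransGen.trans (by simpa [AdjStar] using hA) (by simpa [AdjStar] using hA2)
          simpa [AdjStar] using this
        · obtain ⟨hFt, hAdj1⟩ := push_back hbcf ρ π hπ htρ ht hρ
          obtain ⟨τ, μ', hpre, hFS, hAdj2⟩ := ih (π ++ [t]) ρ hπt hσ' hFt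
          obtain ⟨γ, rfl⟩ := hpre
          have hFS2 := hFS
          obtain ⟨Mf, hMf⟩ := hFS2
          have hMf' : N.Fires N.M0 ((π ++ [t]) ++ (ρ ++ γ)) Mf :=
            adjStar_fires (adjStar_symm hAdj2) hMf
          obtain ⟨Mx, hx1, hx2⟩ := fires_append.mp hMf'
          obtain rfl : N.fire M t = Mx := by
            obtain ⟨My, hy1, hy2⟩ := fires_append.mp hx1
            obtain rfl : M = My := fires_det hπ hy1
            cases hy2 with | cons _ h => cases h; rfl
          obtain ⟨Mz, hz1, hz2⟩ := fires_append.mp hx2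
          obtain rfl : N.fire Mρ t = Mz := fires_det hFt hz1
          have hρt : N.Fires N.M0 (π ++ ρ ++ [t]) (N.fire Mρ t) :=
            adjStar_fires (adjStar_symm hAdj1)
              (fires_append.mpr ⟨M, hπ, .cons ht hFt⟩)
          have hA : N.AdjStar ((π ++ ρ ++ [t]) ++ γ) ((π ++ t :: ρ) ++ γ) :=
            adjStar_append hAdj1 hρt hz2
          refine ⟨τ, ρ ++ [t] ++ γ, ⟨[t] ++ γ, by simp⟩, by simpa using hFS, ?_⟩
          have hA2 : N.AdjStar ((π ++ [t]) ++ (ρ ++ γ)) ((π ++ [t]) ++ σ' ++ τ) := hAdj2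
          have := Relation.ReflTransGen.trans (by simpa [AdjStar] using hA) (by simpa [AdjStar] using hA2)
          simpa [AdjStar] using this

end Net


/-- a binary-conflict-free net has exactly one maximal FS-run, namely the
set of all partial FS-runs (the `↔*`-classes of all firing sequences): this set is an
FS-run (non-empty, prefix-closed, directed), it contains every FS-run, and every maximal
FS-run equals it. -/
theorem stmt11 {S T : Type} (N : Net S T) (hbcf : N.bcf) :
    N.IsFSRun {σ | N.FS σ} ∧
    (∀ R, N.IsFSRun R → R ⊆ {σ | N.FS σ}) ∧
    (∀ R, N.IsFSRun R → (∀ R', N.IsFSRun R' → R ⊆ R' → R' = R) → R = {σ | N.FS σ}) := by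
  have hrun : N.IsFSRun {σ | N.FS σ} := by
    refine ⟨⟨[], ⟨N.M0, .nil _⟩⟩, fun σ hσ => hσ, ?_, fun ρ _ σ hσ _ => hσ, ?_⟩
    · intro σ hσ ρ hadj
      obtain ⟨M, hM⟩ := hσ
      exact ⟨M, Net.adjStar_fires hadj hM⟩
    · intro σ hσ ρ hρ
      obtain ⟨Mσ, hMσ⟩ := hσ
      obtain ⟨Mρ, hMρ⟩ := hρ
      obtain ⟨τ, μ, hpre, hFS, hAdj⟩ :=
        Net.main_confluence hbcf σ [] ρ (.nil _) hMσ hMρ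
      refine ⟨σ ++ τ, by simpa using hFS, ⟨σ ++ τ, ⟨τ, rfl⟩, .refl⟩, ⟨μ, hpre, ?_⟩⟩
      simpa using hAdj
  refine ⟨hrun, fun R hR => fun σ hσ => hR.2.1 σ hσ, ?_⟩
  intro R hR hmax
  exact (hmax _ hrun (fun σ hσ => hR.2.1 σ hσ)).symm
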